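/- arXiv:2008.13376 — 3 statements merged into one kernel-verified Lean document; each statement's English description precedes it below -/
import Mathlib

section
/- Let r ≥ 1, n ≥ 0 and s = (s_1, …, s_{n+1}) ∈ ℝ_{>0}^{n+1} with s_i ≤ s_{i+1} for 1 ≤ i ≤ n. Then s'_i := ε̂^{r,1}_{s_1}(s_{i+1}) > 0 for 1 ≤ i ≤ n, and δ^{r,n+1}(s_1, …, s_{n+1}) = δ^{r,1}(s_1) + δ^{r+1,n}(s'_1, …, s'_n). -/
noncomputable section

open scoped BigOperators

open Classical in
/-- The absolute value `|y| = q^{deg y}` (and `|0| = 0`) on `A = F_q[T]`. -/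
def absA (Fq : Type) [Field Fq] [Fintype Fq] (y : Polynomial Fq) : ℝ :=
  if y = 0 then 0 else (Fintype.card Fq : ℝ) ^ y.natDegree

/-- `ε^{r,n}_s(x) = x + Σ_{y ∈ A^n, y ≠ 0} max(x − max_{1≤i≤n} |y_i|^r·s_i, 0)`.
(For each `x` only finitely many summands are nonzero, so the `tsum` agrees with the
intended sum; the inner `⨆` over the finite type `Fin n` is the maximum.) -/
def epsFun (Fq : Type) [Field Fq] [Fintype Fq] (r n : ℕ) (s : Fin n → ℝ) (x : ℝ) : ℝ :=
  x + ∑' y : {y : Fin n → Polynomial Fq // y ≠ 0},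
      max (x - ⨆ i : Fin n, (absA Fq (y.1 i)) ^ r * s i) 0

/-- `δ^{r,n}(s) = ((q−1)/(q^{r+n}−1))·Σ_{i=1}^n q^{n−i}·ε^{r,i−1}_{(s_1,…,s_{i−1})}(s_i)`. -/
def deltaFun (Fq : Type) [Field Fq] [Fintype Fq] (r n : ℕ) (s : Fin n → ℝ) : ℝ :=
  ((Fintype.card Fq : ℝ) - 1) / ((Fintype.card Fq : ℝ) ^ (r + n) - 1) *
    ∑ i : Fin n, (Fintype.card Fq : ℝ) ^ (n - 1 - (i : ℕ)) *
      epsFun Fq r i (fun j : Fin (i : ℕ) => s (Fin.castLE i.isLt.le j)) (s i)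

/-- `ε̂^{r,n}_s(x) = ε^{r,n}_s(x) − δ^{r,n}(s)`. -/
def epsHat (Fq : Type) [Field Fq] [Fintype Fq] (r n : ℕ) (s : Fin n → ℝ) (x : ℝ) : ℝ :=
  epsFun Fq r n s x - deltaFun Fq r n s

/-!
Write `e(t) = Σ_{y ∈ A} max(t − |y|^r c, 0)`, which is `ε^{r,1}_c(t)` for `t ≥ 0`, and
`ê = e − δ^{r,1}(c)`. Splitting `y = a + uT` with `a ∈ F_q` gives
`e(q^r t) = q^{r+1} e(t) − (q − 1)c` for `t ≥ c`, and `δ^{r,1}(c) = (q − 1)c / (q^{r+1} − 1)` is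
exactly the constant that makes `ê` homogeneous: `ê(|p|^r t) = |p|^{r+1} ê(t)` for `p ≠ 0`.

In `ε^{r,m+1}_s(x)`, summing first over the coordinate `y_1` turns `max(x − max(|y_1|^r s_1, M), 0)`
into `max(e(x) − e(M), 0)`. Since `ê` is increasing and homogeneous,
`ê(max_j |z_j|^r s_{j+1}) = max_j |z_j|^{r+1} ê(s_{j+1})`, so
`ε^{r,m+1}_s(x) = ε^{r+1,m}_{s'}(ê(x)) + δ^{r,1}(s_1)` for `x ≥ s_1`. Substituting this into the
definition of `δ^{r,n+1}` and summing the geometric weights `q^{n−i}` gives the recursion.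
-/

open Polynomial

def Polynomial.coeffZeroDivXEquiv (R : Type*) [Semiring R] : R[X] ≃ R × R[X] where
  toFun p := (p.coeff 0, p.divX)
  invFun p := C p.1 + p.2 * X
  left_inv p := by simpa [add_comm] using divX_mul_X_add p
  right_inv := by rintro ⟨a, u⟩; ext <;> simp [divX_add, coeff_mul_X]

lemma geom_sum_fin_rev_mul (Q : ℝ) (n : ℕ) :
    (∑ j : Fin n, Q ^ (n - 1 - (j : ℕ))) * (Q - 1) = Q ^ n - 1 := by
  rw [Fin.sum_univ_eq_sum_range (fun i => Q ^ (n - 1 - i)) n,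
    Finset.sum_range_reflect (fun i => Q ^ i) n, geom_sum_mul]

lemma tsum_eq_add_tsum_ne_zero {β : Type*} [Zero β] {f : β → ℝ} (hf : Summable f) :
    ∑' y, f y = f 0 + ∑' y : {y : β // y ≠ 0}, f y := by
  rw [← hf.tsum_subtype_add_tsum_subtype_compl {0}, tsum_singleton]
  rfl

lemma max_sub_max_eq_sub {a M x : ℝ} (h : M ≤ x) :
    max (x - max a M) 0 = max (x - a) 0 - max (M - a) 0 := by
  rcases le_total a M with h' | h'
  · rw [max_eq_right h', max_eq_left (by linarith), max_eq_left (by linarith),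
      max_eq_left (by linarith)]
    ring
  · rw [max_eq_left h', max_eq_right (by linarith : M - a ≤ 0), sub_zero]

lemma iSup_fin_succ_eq_max {m : ℕ} (a : Fin (m + 1) → ℝ) (h0 : 0 ≤ a 0) :
    ⨆ i, a i = max (a 0) (⨆ j : Fin m, a j.succ) := by
  have hb : BddAbove (Set.range a) := (Set.finite_range a).bddAbove
  refine le_antisymm (ciSup_le fun i => Fin.cases (le_max_left _ _) (fun j => ?_) i)
    (max_le (le_ciSup hb 0)
      (Real.iSup_le (fun j => le_ciSup hb j.succ) (h0.trans (le_ciSup hb 0))))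
  exact (le_ciSup (f := fun j : Fin m => a j.succ) (Set.finite_range _).bddAbove j).trans
    (le_max_right _ _)

section

variable {Fq : Type} [Field Fq] [Fintype Fq]

local notation "q" => (Fintype.card Fq : ℝ)

lemma one_lt_card_cast : 1 < q := by
  exact_mod_cast Fintype.one_lt_card

@[simp] lemma absA_zero : absA Fq 0 = 0 := if_pos rfl

lemma absA_of_ne_zero {y : Fq[X]} (hy : y ≠ 0) : absA Fq y = q ^ y.natDegree := if_neg hy

lemma absA_nonneg (y : Fq[X]) : 0 ≤ absA Fq y := by
  unfold absA; split <;> positivity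

lemma one_le_absA {y : Fq[X]} (hy : y ≠ 0) : 1 ≤ absA Fq y := by
  rw [absA_of_ne_zero hy]
  exact one_le_pow₀ one_lt_card_cast.le

lemma le_absA_pow_mul {y : Fq[X]} (hy : y ≠ 0) (r : ℕ) {x : ℝ} (hx : 0 ≤ x) :
    x ≤ absA Fq y ^ r * x :=
  le_mul_of_one_le_left hx (one_le_pow₀ (one_le_absA hy))

lemma absA_C {a : Fq} (ha : a ≠ 0) : absA Fq (C a) = 1 := by
  rw [absA_of_ne_zero (C_ne_zero.2 ha), natDegree_C, pow_zero]

lemma absA_C_add_mul_X (a : Fq) {u : Fq[X]} (hu : u ≠ 0) :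
    absA Fq (C a + u * X) = q * absA Fq u := by
  have hdeg : (C a + u * X).natDegree = u.natDegree + 1 := by
    rw [natDegree_add_eq_right_of_natDegree_lt] <;> simp [natDegree_mul_X hu]
  rw [absA_of_ne_zero hu, absA_of_ne_zero (ne_zero_of_natDegree_gt (n := u.natDegree) (by omega)),
    hdeg, pow_succ, mul_comm]

lemma degree_lt_of_absA_lt {p : Fq[X]} {D : ℕ} (h : absA Fq p < q ^ D) : p.degree < D := by
  rcases eq_or_ne p 0 with rfl | hp
  · simp
  · rw [absA_of_ne_zero hp, pow_lt_pow_iff_right₀ one_lt_card_cast] at h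
    exact degree_le_natDegree.trans_lt (by exact_mod_cast h)

lemma finite_setOf_absA_le (B : ℝ) : {p : Fq[X] | absA Fq p ≤ B}.Finite := by
  obtain ⟨D, hD⟩ := pow_unbounded_of_one_lt B (one_lt_card_cast (Fq := Fq))
  have : Finite (degreeLT Fq D) := Finite.of_equiv _ (degreeLTEquiv Fq D).toEquiv.symm
  exact (degreeLT Fq D : Set Fq[X]).toFinite.subset fun p hp =>
    mem_degreeLT.2 (degree_lt_of_absA_lt (lt_of_le_of_lt hp hD))

lemma absA_le_of_pow_mul_lt {r : ℕ} (hr : r ≠ 0) {c x : ℝ} (hc : 0 < c) {p : Fq[X]}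
    (h : absA Fq p ^ r * c < x) : absA Fq p ≤ x / c := by
  have h' : absA Fq p ^ r < x / c := (lt_div_iff₀ hc).2 h
  rcases eq_or_ne p 0 with rfl | hp
  · rw [absA_zero, zero_pow hr] at h'
    simpa using h'.le
  · exact (le_self_pow₀ (one_le_absA hp) hr).trans h'.le

lemma summable_max_sub_iSup {n r : ℕ} (hr : r ≠ 0) {s : Fin n → ℝ} (hs : ∀ i, 0 < s i)
    (x : ℝ) : Summable fun y : Fin n → Fq[X] => max (x - ⨆ i, absA Fq (y i) ^ r * s i) 0 := by
  refine summable_of_hasFiniteSupport <|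
    (Set.Finite.pi fun i => finite_setOf_absA_le (x / s i)).subset fun y hy i _ => ?_
  have hx : (⨆ i, absA Fq (y i) ^ r * s i) < x :=
    lt_of_not_ge fun h => hy (max_eq_right (by linarith))
  exact absA_le_of_pow_mul_lt hr (hs i) ((le_ciSup (Set.finite_range _).bddAbove i).trans_lt hx)

lemma epsFun_eq_tsum {n r : ℕ} (hr : r ≠ 0) {s : Fin n → ℝ} (hs : ∀ i, 0 < s i) {x : ℝ}
    (hx : 0 ≤ x) :
    epsFun Fq r n s x = ∑' y : Fin n → Fq[X], max (x - ⨆ i, absA Fq (y i) ^ r * s i) 0 := by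
  rw [tsum_eq_add_tsum_ne_zero (summable_max_sub_iSup hr hs x)]
  simp [epsFun, zero_pow hr, hx]

lemma epsFun_of_eq_zero {n : ℕ} (hn : n = 0) (r : ℕ) (s : Fin n → ℝ) (x : ℝ) :
    epsFun Fq r n s x = x := by
  subst hn
  have : IsEmpty {y : Fin 0 → Fq[X] // y ≠ 0} := ⟨fun y => y.2 (Subsingleton.elim _ _)⟩
  simp [epsFun]

lemma deltaFun_one (r : ℕ) (c : ℝ) :
    deltaFun Fq r 1 (fun _ => c) = (q - 1) / (q ^ (r + 1) - 1) * c := by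
  simp [deltaFun, epsFun_of_eq_zero]

lemma deltaFun_succ (r n : ℕ) (s : Fin (n + 1) → ℝ) :
    deltaFun Fq r (n + 1) s
      = (q - 1) / (q ^ (r + (n + 1)) - 1) * (q ^ n * s 0 + ∑ j : Fin n, q ^ (n - 1 - (j : ℕ)) *
          epsFun Fq r (j.succ : ℕ) (fun k => s (Fin.castLE j.succ.isLt.le k)) (s j.succ)) := by
  rw [deltaFun, Fin.sum_univ_succ, epsFun_of_eq_zero (n := ((0 : Fin (n + 1)) : ℕ)) rfl]
  congr 2
  refine Finset.sum_congr rfl fun j _ => ?_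
  rw [show n + 1 - 1 - (j.succ : ℕ) = n - 1 - j by rw [Fin.val_succ]; omega]

lemma deltaFun_succ_eq_of_epsFun_eq {r n : ℕ} {s : Fin (n + 1) → ℝ} {E : Fin n → ℝ}
    (hE : ∀ j : Fin n,
      epsFun Fq r (j.succ : ℕ) (fun k => s (Fin.castLE j.succ.isLt.le k)) (s j.succ)
        = E j + deltaFun Fq r 1 (fun _ => s 0)) :
    deltaFun Fq r (n + 1) s
      = deltaFun Fq r 1 (fun _ => s 0)
        + (q - 1) / (q ^ (r + 1 + n) - 1) * ∑ j : Fin n, q ^ (n - 1 - (j : ℕ)) * E j := by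
  have hpow : ∀ k ≠ 0, q ^ k - 1 ≠ 0 := fun k hk =>
    (sub_pos.2 (one_lt_pow₀ one_lt_card_cast hk)).ne'
  have h1 : q - 1 ≠ 0 := by simpa using hpow 1 one_ne_zero
  have h2 := hpow (r + 1) (Nat.succ_ne_zero r)
  have h3 := hpow (r + (n + 1)) (by omega)
  simp only [deltaFun_succ r n s, hE, mul_add, Finset.sum_add_distrib, ← Finset.sum_mul,
    deltaFun_one]
  rw [show r + 1 + n = r + (n + 1) by omega]
  field_simp
  linear_combination s 0 * geom_sum_fin_rev_mul q n

lemma tsum_ne_zero_max_sub_eq_zero (r : ℕ) {c t : ℝ} (hc : 0 ≤ c) (ht : t ≤ c) :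
    ∑' y : {y : Fq[X] // y ≠ 0}, max (t - absA Fq y ^ r * c) 0 = 0 :=
  (tsum_congr fun y => max_eq_right (by linarith [le_absA_pow_mul y.2 r hc])).trans tsum_zero

variable (Fq) in
def epsOne (r : ℕ) (c t : ℝ) : ℝ :=
  ∑' y : Fq[X], max (t - absA Fq y ^ r * c) 0

variable (Fq) in
def epsHatOne (r : ℕ) (c t : ℝ) : ℝ :=
  epsOne Fq r c t - deltaFun Fq r 1 (fun _ => c)

section epsOne

variable {r : ℕ} (hr : r ≠ 0) {c : ℝ} (hc : 0 < c)
include hr hc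

lemma summable_epsOne (t : ℝ) : Summable fun y : Fq[X] => max (t - absA Fq y ^ r * c) 0 :=
  summable_of_hasFiniteSupport <| (finite_setOf_absA_le (t / c)).subset fun _ hy =>
    absA_le_of_pow_mul_lt hr hc (lt_of_not_ge fun h => hy (max_eq_right (sub_nonpos.2 h)))

lemma epsFun_one {t : ℝ} (ht : 0 ≤ t) : epsFun Fq r 1 (fun _ => c) t = epsOne Fq r c t := by
  rw [epsFun_eq_tsum hr (fun _ => hc) ht, ← (Equiv.funUnique (Fin 1) Fq[X]).symm.tsum_eq]
  simp [epsOne]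

lemma epsHat_one {t : ℝ} (ht : 0 ≤ t) : epsHat Fq r 1 (fun _ => c) t = epsHatOne Fq r c t := by
  rw [epsHat, epsFun_one hr hc ht, epsHatOne]

lemma epsOne_mono : Monotone (epsOne Fq r c) := fun a b hab =>
  (summable_epsOne hr hc a).tsum_le_tsum (fun _ => max_le_max (by linarith) le_rfl)
    (summable_epsOne hr hc b)

lemma epsOne_eq_add_tsum_ne_zero {t : ℝ} (ht : 0 ≤ t) :
    epsOne Fq r c t = t + ∑' y : {y : Fq[X] // y ≠ 0}, max (t - absA Fq y ^ r * c) 0 := by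
  rw [epsOne, tsum_eq_add_tsum_ne_zero (summable_epsOne hr hc t)]
  simp [zero_pow hr, ht]

lemma le_epsOne {t : ℝ} (ht : 0 ≤ t) : t ≤ epsOne Fq r c t := by
  rw [epsOne_eq_add_tsum_ne_zero hr hc ht, le_add_iff_nonneg_right]
  exact tsum_nonneg fun _ => le_max_right _ _

lemma epsOne_zero : epsOne Fq r c 0 = 0 := by
  rw [epsOne_eq_add_tsum_ne_zero hr hc le_rfl, tsum_ne_zero_max_sub_eq_zero r hc.le hc.le,
    add_zero]

lemma epsOne_self : epsOne Fq r c c = c := by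
  rw [epsOne_eq_add_tsum_ne_zero hr hc hc.le, tsum_ne_zero_max_sub_eq_zero r hc.le le_rfl,
    add_zero]

lemma tsum_max_sub_max (M x : ℝ) :
    ∑' y : Fq[X], max (x - max (absA Fq y ^ r * c) M) 0
      = max (epsOne Fq r c x - epsOne Fq r c M) 0 := by
  rcases le_or_gt x M with hxM | hMx
  · rw [max_eq_right (sub_nonpos.2 (epsOne_mono hr hc hxM))]
    exact (tsum_congr fun y =>
      max_eq_right (by linarith [le_max_right (absA Fq y ^ r * c) M])).trans tsum_zero
  · rw [max_eq_left (sub_nonneg.2 (epsOne_mono hr hc hMx.le)), epsOne, epsOne,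
      ← (summable_epsOne hr hc x).tsum_sub (summable_epsOne hr hc M)]
    exact tsum_congr fun y => max_sub_max_eq_sub hMx.le

lemma tsum_C_add_mul_X {T : ℝ} (hT : 0 ≤ T) (a : Fq) :
    ∑' u : Fq[X], max (q ^ r * T - absA Fq (C a + u * X) ^ r * c) 0
      = max (q ^ r * T - absA Fq (C a) ^ r * c) 0 + q ^ r * (epsOne Fq r c T - T) := by
  have hinj : Function.Injective fun u : Fq[X] => C a + u * X :=
    (add_right_injective (C a)).comp (mul_left_injective₀ X_ne_zero)
  have hsum : Summable fun u : Fq[X] => max (q ^ r * T - absA Fq (C a + u * X) ^ r * c) 0 :=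
    (summable_epsOne hr hc _).comp_injective hinj
  rw [tsum_eq_add_tsum_ne_zero hsum, epsOne_eq_add_tsum_ne_zero hr hc hT, add_sub_cancel_left,
    ← tsum_mul_left, zero_mul, add_zero]
  congr 1
  refine tsum_congr fun u => ?_
  rw [absA_C_add_mul_X a u.2, mul_pow, mul_max_of_nonneg _ _ (by positivity), mul_zero, mul_sub,
    mul_assoc]

lemma sum_max_sub_absA_C {T : ℝ} (hT : c ≤ T) :
    ∑ a : Fq, max (T - absA Fq (C a) ^ r * c) 0 = q * T - (q - 1) * c := by
  classical
  have hterm : ∀ a : Fq,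
      max (T - absA Fq (C a) ^ r * c) 0 = (T - c) + if a = 0 then c else 0 := by
    intro a
    split_ifs with ha
    · simp [ha, zero_pow hr, hc.le.trans hT]
    · rw [absA_C ha, one_pow, one_mul, max_eq_left (by linarith), add_zero]
  rw [Finset.sum_congr rfl fun a _ => hterm a, Finset.sum_add_distrib, Finset.sum_ite_eq',
    if_pos (Finset.mem_univ 0)]
  simp only [Finset.sum_const, Finset.card_univ, nsmul_eq_mul]
  ring

lemma epsOne_card_pow_mul {t : ℝ} (ht : c ≤ t) :
    epsOne Fq r c (q ^ r * t) = q ^ (r + 1) * epsOne Fq r c t - (q - 1) * c := by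
  have hqt : c ≤ q ^ r * t :=
    ht.trans (le_mul_of_one_le_left (hc.le.trans ht) (one_le_pow₀ one_lt_card_cast.le))
  have hsum : Summable fun p : Fq × Fq[X] =>
      max (q ^ r * t - absA Fq (C p.1 + p.2 * X) ^ r * c) 0 :=
    (coeffZeroDivXEquiv Fq).symm.summable_iff.2 (summable_epsOne hr hc _)
  rw [epsOne, ← (coeffZeroDivXEquiv Fq).symm.tsum_eq]
  simp only [coeffZeroDivXEquiv, Equiv.coe_fn_symm_mk]
  rw [hsum.tsum_prod, tsum_fintype,
    Finset.sum_congr rfl fun a _ => tsum_C_add_mul_X hr hc (hc.le.trans ht) a,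
    Finset.sum_add_distrib, sum_max_sub_absA_C hr hc hqt]
  simp only [Finset.sum_const, Finset.card_univ, nsmul_eq_mul]
  ring

lemma epsHatOne_card_pow_mul {t : ℝ} (ht : c ≤ t) :
    epsHatOne Fq r c (q ^ r * t) = q ^ (r + 1) * epsHatOne Fq r c t := by
  have hq : q ^ (r + 1) - 1 ≠ 0 :=
    (sub_pos.2 (one_lt_pow₀ one_lt_card_cast (Nat.succ_ne_zero r))).ne'
  rw [epsHatOne, epsHatOne, epsOne_card_pow_mul hr hc ht, deltaFun_one]
  field_simp
  ring

lemma epsHatOne_absA_pow_mul {p : Fq[X]} (hp : p ≠ 0) {t : ℝ} (ht : c ≤ t) :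
    epsHatOne Fq r c (absA Fq p ^ r * t) = absA Fq p ^ (r + 1) * epsHatOne Fq r c t := by
  rw [absA_of_ne_zero hp]
  induction p.natDegree with
  | zero => simp
  | succ d ih =>
    have hle : c ≤ (q ^ d) ^ r * t :=
      ht.trans (le_mul_of_one_le_left (hc.le.trans ht)
        (one_le_pow₀ (one_le_pow₀ one_lt_card_cast.le)))
    rw [pow_succ, mul_pow, mul_comm (_ ^ r), mul_assoc, epsHatOne_card_pow_mul hr hc hle, ih]
    ring

lemma epsHatOne_pos {t : ℝ} (ht : c ≤ t) : 0 < epsHatOne Fq r c t := by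
  have hq : q - 1 < q ^ (r + 1) - 1 := by
    have := pow_lt_pow_right₀ (one_lt_card_cast (Fq := Fq)) (show 1 < r + 1 by omega)
    rw [pow_one] at this
    linarith
  have hδ : deltaFun Fq r 1 (fun _ => c) < c := by
    rw [deltaFun_one]
    exact mul_lt_of_lt_one_left hc
      ((div_lt_one (by linarith [one_lt_card_cast (Fq := Fq)])).2 hq)
  have hmono := epsOne_mono (Fq := Fq) hr hc ht
  rw [epsOne_self hr hc] at hmono
  rw [epsHatOne]
  linarith

lemma epsHatOne_iSup {m : ℕ} {w : Fin m → ℝ} (hw : ∀ j, c ≤ w j) {z : Fin m → Fq[X]}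
    (hz : z ≠ 0) :
    epsHatOne Fq r c (⨆ j, absA Fq (z j) ^ r * w j)
      = ⨆ j, absA Fq (z j) ^ (r + 1) * epsHatOne Fq r c (w j) := by
  obtain ⟨j₀, hj₀⟩ := Function.ne_iff.1 hz
  have : Nonempty (Fin m) := ⟨j₀⟩
  have hc_le : ∀ j, z j ≠ 0 → c ≤ absA Fq (z j) ^ r * w j := fun j hj =>
    (hw j).trans (le_absA_pow_mul hj r (hc.le.trans (hw j)))
  set a : Fin m → ℝ := fun j => absA Fq (z j) ^ r * w j
  obtain ⟨j₁, hj₁⟩ : ∃ j₁, a j₁ = ⨆ j, a j := exists_eq_ciSup_of_finite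
  have hle : ∀ j, a j ≤ a j₁ := fun j => hj₁ ▸ le_ciSup (Set.finite_range a).bddAbove j
  have hj₁0 : z j₁ ≠ 0 := fun h =>
    hc.not_ge (by simpa [a, h, zero_pow hr] using (hc_le j₀ hj₀).trans (hle j₀))
  have hb : ∀ j,
      absA Fq (z j) ^ (r + 1) * epsHatOne Fq r c (w j) ≤ epsHatOne Fq r c (a j₁) := by
    intro j
    rcases eq_or_ne (z j) 0 with h | h
    · simpa [h, zero_pow (Nat.succ_ne_zero r)] using (epsHatOne_pos hr hc (hc_le j₁ hj₁0)).le
    · rw [← epsHatOne_absA_pow_mul hr hc h (hw j)]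
      exact sub_le_sub_right (epsOne_mono hr hc (hle j)) _
  rw [← hj₁]
  refine le_antisymm (le_ciSup_of_le (Set.finite_range _).bddAbove j₁ ?_) (ciSup_le hb)
  rw [epsHatOne_absA_pow_mul hr hc hj₁0 (hw j₁)]

end epsOne

lemma hasSum_epsFun_succ {m r : ℕ} (hr : r ≠ 0) {s : Fin (m + 1) → ℝ} (hs : ∀ i, 0 < s i)
    {x : ℝ} (hx : 0 ≤ x) :
    HasSum (fun z : Fin m → Fq[X] => max (epsOne Fq r (s 0) x
        - epsOne Fq r (s 0) (⨆ j, absA Fq (z j) ^ r * s j.succ)) 0)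
      (epsFun Fq r (m + 1) s x) := by
  let e : (Fin m → Fq[X]) × Fq[X] ≃ (Fin (m + 1) → Fq[X]) :=
    (Equiv.prodComm _ _).trans (Fin.consEquiv fun _ => Fq[X])
  set F : (Fin (m + 1) → Fq[X]) → ℝ := fun y => max (x - ⨆ i, absA Fq (y i) ^ r * s i) 0
  have hsum : Summable (F ∘ e) := e.summable_iff.2 (summable_max_sub_iSup hr hs x)
  have hfib : ∀ z a, (F ∘ e) (z, a)
      = max (x - max (absA Fq a ^ r * s 0) (⨆ j, absA Fq (z j) ^ r * s j.succ)) 0 :=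
    fun z a => by
      simp only [F, Function.comp_apply]
      rw [iSup_fin_succ_eq_max _ (mul_nonneg (pow_nonneg (absA_nonneg _) r) (hs 0).le)]
      rfl
  rw [epsFun_eq_tsum hr hs hx, ← e.tsum_eq]
  refine hsum.hasSum.prod_fiberwise fun z => ?_
  have h := (hsum.prod_factor z).hasSum
  rwa [tsum_congr (hfib z), tsum_max_sub_max hr (hs 0)] at h

theorem epsFun_succ {m r : ℕ} (hr : r ≠ 0) {s : Fin (m + 1) → ℝ} (hs0 : 0 < s 0)
    (hs : ∀ i, s 0 ≤ s i) {x : ℝ} (hx : s 0 ≤ x) :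
    epsFun Fq r (m + 1) s x
      = epsFun Fq (r + 1) m (fun j => epsHatOne Fq r (s 0) (s j.succ)) (epsHatOne Fq r (s 0) x)
        + deltaFun Fq r 1 (fun _ => s 0) := by
  have hx0 : 0 ≤ x := hs0.le.trans hx
  have h := hasSum_epsFun_succ (Fq := Fq) hr (fun i => hs0.trans_le (hs i)) hx0
  rw [← h.tsum_eq, tsum_eq_add_tsum_ne_zero h.summable]
  have hterm : ∀ z : {z : Fin m → Fq[X] // z ≠ 0},
      max (epsOne Fq r (s 0) x - epsOne Fq r (s 0) (⨆ j, absA Fq (z.1 j) ^ r * s j.succ)) 0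
        = max (epsHatOne Fq r (s 0) x
            - ⨆ j, absA Fq (z.1 j) ^ (r + 1) * epsHatOne Fq r (s 0) (s j.succ)) 0 := by
    intro z
    rw [← epsHatOne_iSup hr hs0 (fun j => hs j.succ) z.2, epsHatOne, epsHatOne,
      sub_sub_sub_cancel_right]
  simp only [tsum_congr hterm, Pi.zero_apply, absA_zero, zero_pow hr, zero_mul,
    Real.iSup_const_zero, epsOne_zero hr hs0, sub_zero,
    max_eq_left (hx0.trans (le_epsOne hr hs0 hx0)), epsFun, epsHatOne]
  ring

end

/-- Let `r ≥ 1`, `n ≥ 0` and `s = (s_1, …, s_{n+1}) ∈ ℝ_{>0}^{n+1}` with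
`s_i ≤ s_{i+1}`.  Then `s'_i := ε̂^{r,1}_{s_1}(s_{i+1}) > 0` for `1 ≤ i ≤ n`, and
`δ^{r,n+1}(s_1, …, s_{n+1}) = δ^{r,1}(s_1) + δ^{r+1,n}(s'_1, …, s'_n)`. -/
theorem statement8 (Fq : Type) [Field Fq] [Fintype Fq]
    (r n : ℕ) (hr : 1 ≤ r) (s : Fin (n + 1) → ℝ) (hs : ∀ i, 0 < s i)
    (hmono : Monotone s) :
    (∀ i : Fin n, 0 < epsHat Fq r 1 (fun _ => s 0) (s i.succ)) ∧
    deltaFun Fq r (n + 1) s =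
      deltaFun Fq r 1 (fun _ => s 0) +
        deltaFun Fq (r + 1) n (fun i => epsHat Fq r 1 (fun _ => s 0) (s i.succ)) := by
  have hr0 : r ≠ 0 := by omega
  have hs0 : ∀ i, s 0 ≤ s i := fun i => hmono (Fin.zero_le i)
  have hhat : ∀ i : Fin n,
      epsHat Fq r 1 (fun _ => s 0) (s i.succ) = epsHatOne Fq r (s 0) (s i.succ) :=
    fun i => epsHat_one hr0 (hs 0) (hs i.succ).le
  refine ⟨fun i => hhat i ▸ epsHatOne_pos hr0 (hs 0) (hs0 i.succ), ?_⟩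
  rw [deltaFun_succ_eq_of_epsFun_eq fun j => epsFun_succ
      (s := fun k => s (Fin.castLE j.succ.isLt.le k)) hr0 (hs 0) (fun _ => hs0 _) (hs0 _),
    funext hhat]
  rfl
end
end

section
/- For every nonzero a ∈ F_q[T], say of degree m: (1) the element ψ(a)(t^{−1}) ∈ Q (the evaluation of the polynomial ψ(a) at t^{−1}) is nonzero; set h_a := ψ(a)(t^{−1})^{−1} ∈ Q; (2) h_a ∈ I; (3) if m = 0 then h_a·t^{−1} ∈ R^×; (4) if m ≥ 1 then h_a ∈ R, t^{q^{rm−1}} divides h_a in R, and h_a·f^{E_m} = u·t^{q^{rm}} for some unit u ∈ R^×, where E_m = Σ_{j=0}^{m−1} q^{rj}; (5) the map F_q[T] → Q sending a to ψ(a)(t^{−1}) (and 0 to 0) is injective; (6) for every n ≥ 1, h_a ∈ I^n for all but finitely many nonzero a ∈ F_q[T]. -/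
/-!
Write `Q = q ^ r` and `E_m = ∑_{j<m} Q ^ j`. Clearing denominators,
`t ^ Q ^ i * ψ_T^{∘i}(t⁻¹)` lies in `R` and equals `f ^ E_i * u_i` with `u_i ≡ 1 mod I`.
The induction runs on one fact: since `R` is integrally closed,
`f ^ q ∣ t ^ ((Q - 1) * (q - 1))` gives `f * c = t ^ (Q - q ^ (r - 1))`, and `c ∈ I` because
`R ⧸ I` is reduced; so every non-leading term of `ψ_T` can trade powers of `t` for the missing
powers of `f`, picking up a factor from `I`. Summing over the coefficients of `a` in the same
way, `t ^ Q ^ m * ψ(a)(t⁻¹) = f ^ E_m * U` where `U` is congruent to the leading coefficient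
of `a` mod `I`, hence a unit since `R` is `I`-adically complete. Integral closedness also gives
`f ^ E_m ∣ t ^ (Q ^ m - q ^ (r m - 1))`, so `h_a` is a multiple of `t ^ q ^ (r m - 1)`, and
all the claims follow.
-/

noncomputable section

/-- The `i`-fold composite `ψ_T^{∘i}` of a polynomial with itself (`ψ_T^{∘0} = X`). -/
def psiIter {R : Type*} [CommRing R] (psiT : Polynomial R) : ℕ → Polynomial R
  | 0 => Polynomial.X
  | (i + 1) => psiT.comp (psiIter psiT i)

/-- For `a = Σ_i b_i·T^i ∈ F_q[T]`, the polynomial `ψ(a) = Σ_i b_i·ψ_T^{∘i} ∈ R[X]`. -/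
def psiOf {Fq : Type*} [Field Fq] [Fintype Fq] {R : Type*} [CommRing R] [Algebra Fq R]
    (psiT : Polynomial R) (a : Polynomial Fq) : Polynomial R :=
  a.sum fun i b => Polynomial.C (algebraMap Fq R b) * psiIter psiT i

/-- The element `ψ(a)(t^{−1})` of the fraction field `Q` of `R`. -/
def evAt {Fq : Type*} [Field Fq] [Fintype Fq] {R : Type*} [CommRing R] [IsDomain R]
    [Algebra Fq R] (psiT : Polynomial R) (t : R) (a : Polynomial Fq) : FractionRing R :=
  Polynomial.aeval ((algebraMap R (FractionRing R) t)⁻¹) (psiOf psiT a)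

open Polynomial Finset

theorem Nat.geomSum_pow_mul_mul_add_one {q : ℕ} (hq : 0 < q) (r m : ℕ) :
    (∑ j ∈ range m, q ^ (r * j)) * (q ^ r - 1) + 1 = q ^ (r * m) := by
  have h := geom_sum_mul_add (q ^ r - 1) m
  rw [Nat.sub_add_cancel (Nat.one_le_pow _ _ hq)] at h
  simpa only [pow_mul] using h

theorem Nat.geomSum_pow_mul_succ (q r i : ℕ) :
    ∑ j ∈ range (i + 1), q ^ (r * j) = (∑ j ∈ range i, q ^ (r * j)) * q ^ r + 1 := by
  simp only [pow_mul, geom_sum_succ, mul_comm]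

theorem Nat.geomSum_pow_mul_lt {q : ℕ} (hq : 0 < q) (r : ℕ) {i m : ℕ} (h : i < m) :
    ∑ j ∈ range i, q ^ (r * j) < ∑ j ∈ range m, q ^ (r * j) :=
  sum_lt_sum_of_subset (range_subset_range.2 h.le) (mem_range.2 h) (by simp)
    (Nat.pow_pos hq) fun _ _ _ => Nat.zero_le _

theorem Nat.mul_geomSum_pow_mul_sub_le {q d : ℕ} (hq : 0 < q) (r : ℕ) (hd : d ≤ q ^ r - 1)
    (i m : ℕ) :
    d * (∑ j ∈ range m, q ^ (r * j) - ∑ j ∈ range i, q ^ (r * j)) ≤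
      q ^ (r * m) - q ^ (r * i) := by
  rw [← Nat.geomSum_pow_mul_mul_add_one hq r m, ← Nat.geomSum_pow_mul_mul_add_one hq r i,
    Nat.add_sub_add_right, ← Nat.sub_mul, mul_comm]
  exact Nat.mul_le_mul_left _ hd

theorem Polynomial.finite_setOf_natDegree_le (K : Type*) [Field K] [Finite K] (n : ℕ) :
    {a : K[X] | a.natDegree ≤ n}.Finite := by
  have : Finite (degreeLT K (n + 1)) :=
    Finite.of_equiv _ (degreeLTEquiv K (n + 1)).toEquiv.symm
  refine (Set.toFinite (degreeLT K (n + 1) : Set K[X])).subset fun a ha => ?_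
  exact mem_degreeLT.2 (degree_le_natDegree.trans_lt (by exact_mod_cast Nat.lt_succ_of_le ha))

theorem IsAdicComplete.isUnit_of_sub_mem {R : Type*} [CommRing R] (I : Ideal R)
    [IsAdicComplete I R] {x v : R} (hv : IsUnit v) (h : x - v ∈ I) : IsUnit x := by
  obtain ⟨v, rfl⟩ := hv
  have hxv : x * ↑v⁻¹ - 1 ∈ I := by
    simpa [sub_mul] using I.mul_mem_right (↑v⁻¹ : R) h
  simpa using (Ideal.isUnit_of_sub_one_mem_jacobson_bot _
    (IsAdicComplete.le_jacobson_bot I hxv)).mul v.isUnit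

theorem pow_geomSum_dvd_pow {R : Type*} [CommRing R] [IsDomain R] [IsIntegrallyClosed R]
    {f t : R} {q r : ℕ} (hq : 0 < q) (h : f ^ q ∣ t ^ ((q ^ r - 1) * (q - 1))) (m : ℕ) :
    f ^ (∑ j ∈ range m, q ^ (r * j)) ∣ t ^ (q ^ (r * m) - q ^ (r * m - 1)) := by
  have hexp : (q ^ (r * m) - 1) * (q - 1) ≤ (q ^ (r * m) - q ^ (r * m - 1)) * q := by
    rcases Nat.eq_zero_or_pos (r * m) with h0 | hpos
    · simp [h0]
    · calc (q ^ (r * m) - 1) * (q - 1) ≤ q ^ (r * m) * (q - 1) :=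
            Nat.mul_le_mul_right _ (Nat.sub_le _ _)
        _ = (q ^ (r * m) - q ^ (r * m - 1)) * q := by
            rw [Nat.sub_mul, pow_sub_one_mul hpos.ne', Nat.mul_sub, mul_one]
  rw [← IsIntegrallyClosed.pow_dvd_pow_iff hq.ne', ← pow_mul, mul_comm, pow_mul, ← pow_mul t]
  calc _ ∣ (t ^ ((q ^ r - 1) * (q - 1))) ^ (∑ j ∈ range m, q ^ (r * j)) :=
        pow_dvd_pow_of_dvd h _
    _ = t ^ ((q ^ (r * m) - 1) * (q - 1)) := by
      rw [← pow_mul, ← Nat.geomSum_pow_mul_mul_add_one hq r m, Nat.add_sub_cancel]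
      ring_nf
    _ ∣ _ := pow_dvd_pow t hexp

theorem mul_pow_mul_pow_mem_span_mul {R : Type*} [CommRing R] {I : Ideal R} {f c t : R}
    {d : ℕ} (hfc : f * c = t ^ d) (hc : c ∈ I) (α : R) {e E M : ℕ} (he : e < E)
    (hM : d * (E - e) ≤ M) :
    α * f ^ e * t ^ M ∈ Ideal.span {f ^ E} * I := by
  refine Ideal.mem_span_singleton_mul.2
    ⟨α * c ^ (E - e) * t ^ (M - d * (E - e)), ?_, ?_⟩
  · exact I.mul_mem_right _ (I.mul_mem_left _ (I.pow_mem_of_mem hc _ (by omega)))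
  · calc f ^ E * (α * c ^ (E - e) * t ^ (M - d * (E - e)))
        = α * f ^ e * ((f * c) ^ (E - e) * t ^ (M - d * (E - e))) := by
          rw [← pow_mul_pow_sub f he.le, mul_pow]
          ring
      _ = α * f ^ e * t ^ M := by
          rw [hfc, ← pow_mul, ← pow_add, Nat.add_sub_cancel' hM]

/-- `t ^ q ^ (r * i) * ψ_T^{∘i}(t⁻¹)` with the denominators cleared inside `R`
(see `aeval_psiIter_mul_pow`). -/
def scaledIter {R : Type*} [CommRing R] (q r : ℕ) (ac : ℕ → R) (t : R) : ℕ → R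
  | 0 => 1
  | i + 1 => ∑ j ∈ range (r + 1),
      ac j * scaledIter q r ac t i ^ q ^ j * t ^ (q ^ (r * i) * (q ^ r - q ^ j))

section ScaledIter

variable {R : Type*} [CommRing R] {q r : ℕ} {ac : ℕ → R} {t : R}

theorem aeval_psiIter_mul_pow {K : Type*} [CommRing K] [Algebra R K] {psiT : R[X]}
    (hpsiT : psiT = ∑ i ∈ range (r + 1), C (ac i) * X ^ q ^ i) (hq : 0 < q)
    {v : K} (hv : v * algebraMap R K t = 1) (i : ℕ) :
    aeval v (psiIter psiT i) * algebraMap R K t ^ q ^ (r * i) =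
      algebraMap R K (scaledIter q r ac t i) := by
  induction i with
  | zero => simp [psiIter, scaledIter, hv]
  | succ i ih =>
    simp only [psiIter, scaledIter, aeval_comp, hpsiT, map_sum, map_mul, map_pow, aeval_C,
      aeval_X, sum_mul, ← ih]
    refine sum_congr rfl fun j hj => ?_
    have hexp : q ^ (r * (i + 1)) = q ^ (r * i) * q ^ j + q ^ (r * i) * (q ^ r - q ^ j) := by
      have hjr : j ≤ r := Nat.lt_succ_iff.1 (mem_range.1 hj)
      rw [← Nat.mul_add, Nat.add_sub_cancel' (Nat.pow_le_pow_right hq hjr), ← pow_add,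
        Nat.mul_succ]
    rw [hexp, pow_add, pow_mul]
    ring

theorem scaledIter_eq_pow_mul {I : Ideal R} {c : R} {d : ℕ} (hq : 0 < q)
    (hfc : ac r * c = t ^ d) (hc : c ∈ I) (hd : ∀ j < r, d ≤ q ^ r - q ^ j) (i : ℕ) :
    ∃ u, u - 1 ∈ I ∧ scaledIter q r ac t i = ac r ^ (∑ j ∈ range i, q ^ (r * j)) * u := by
  induction i with
  | zero => exact ⟨1, by simp, by simp [scaledIter]⟩
  | succ i ih =>
    obtain ⟨u, hu, hw⟩ := ih
    set E := ∑ j ∈ range i, q ^ (r * j)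
    have hgeom := Nat.geomSum_pow_mul_mul_add_one hq r i
    have hlower : ∑ j ∈ range r, ac j * scaledIter q r ac t i ^ q ^ j *
        t ^ (q ^ (r * i) * (q ^ r - q ^ j)) ∈ Ideal.span {ac r ^ (E * q ^ r + 1)} * I := by
      refine Ideal.sum_mem _ fun j hj => ?_
      have hjr := mem_range.1 hj
      have hqj : q ^ j ≤ q ^ r := Nat.pow_le_pow_right hq hjr.le
      have hEqj : E * q ^ j ≤ E * q ^ r := Nat.mul_le_mul_left _ hqj
      have hexp : d * (E * q ^ r + 1 - E * q ^ j) ≤ q ^ (r * i) * (q ^ r - q ^ j) :=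
        calc d * (E * q ^ r + 1 - E * q ^ j) = d * (E * (q ^ r - q ^ j) + 1) := by
              congr 1; rw [Nat.mul_sub]; omega
          _ ≤ (q ^ r - q ^ j) * (E * (q ^ r - 1) + 1) := by
              gcongr
              exacts [hd j hjr, Nat.one_le_pow _ _ hq]
          _ = q ^ (r * i) * (q ^ r - q ^ j) := by rw [hgeom, mul_comm]
      convert mul_pow_mul_pow_mem_span_mul hfc hc (ac j * u ^ q ^ j)
        (Nat.lt_add_one_of_le hEqj) hexp using 2
      rw [hw]
      ring
    obtain ⟨y, hy, hlower⟩ := Ideal.mem_span_singleton_mul.1 hlower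
    refine ⟨u ^ q ^ r + y, ?_, ?_⟩
    · have hpow : u ^ q ^ r - 1 ∈ I := by
        simpa using I.mem_of_dvd (sub_dvd_pow_sub_pow u 1 (q ^ r)) hu
      simpa [add_sub_right_comm] using I.add_mem hpow hy
    · rw [scaledIter, sum_range_succ, ← hlower, Nat.geomSum_pow_mul_succ, hw]
      simp only [Nat.sub_self, mul_zero, pow_zero, mul_one]
      ring

end ScaledIter

theorem sum_coeff_mul_eq_pow_mul_unit {Fq R : Type*} [Field Fq] [CommRing R] [Algebra Fq R]
    {I : Ideal R} [IsAdicComplete I R] {f c t : R} {d : ℕ} (hfc : f * c = t ^ d) (hc : c ∈ I)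
    {E N : ℕ → ℕ} {w : ℕ → R} (hw : ∀ i, ∃ u, u - 1 ∈ I ∧ w i = f ^ E i * u)
    {a : Fq[X]} (ha : a ≠ 0)
    (hEN : ∀ i < a.natDegree,
      E i < E a.natDegree ∧ d * (E a.natDegree - E i) ≤ N a.natDegree - N i) :
    ∃ U : Rˣ, ∑ i ∈ a.support, algebraMap Fq R (a.coeff i) * w i *
      t ^ (N a.natDegree - N i) = f ^ E a.natDegree * U := by
  set m := a.natDegree
  choose u hu hw using hw
  have hlower : ∑ i ∈ a.support.erase m, algebraMap Fq R (a.coeff i) * w i *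
      t ^ (N m - N i) ∈ Ideal.span {f ^ E m} * I := by
    refine Ideal.sum_mem _ fun i hi => ?_
    have him : i < m := (le_natDegree_of_mem_supp i (mem_of_mem_erase hi)).lt_of_ne
      (ne_of_mem_erase hi)
    convert mul_pow_mul_pow_mem_span_mul hfc hc (algebraMap Fq R (a.coeff i) * u i)
      (hEN i him).1 (hEN i him).2 using 1
    rw [hw i]
    ring
  obtain ⟨y, hy, hlower⟩ := Ideal.mem_span_singleton_mul.1 hlower
  have hlead : IsUnit (algebraMap Fq R a.leadingCoeff) :=
    (isUnit_iff_ne_zero.2 (leadingCoeff_ne_zero.2 ha)).map _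
  have hunit : IsUnit (algebraMap Fq R a.leadingCoeff * u m + y) := by
    refine IsAdicComplete.isUnit_of_sub_mem I hlead ?_
    have : algebraMap Fq R a.leadingCoeff * u m + y - algebraMap Fq R a.leadingCoeff =
        algebraMap Fq R a.leadingCoeff * (u m - 1) + y := by ring
    exact this ▸ I.add_mem (I.mul_mem_left _ (hu m)) hy
  refine ⟨hunit.unit, ?_⟩
  rw [← add_sum_erase _ _ (natDegree_mem_support_of_nonzero ha), ← hlower, hw m,
    IsUnit.unit_spec, Nat.sub_self, pow_zero, mul_one, leadingCoeff]
  ring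

theorem aeval_psiOf_mul_pow {Fq R K : Type*} [Field Fq] [Fintype Fq] [CommRing R]
    [Algebra Fq R] [CommRing K] [Algebra R K] {q r : ℕ} {ac : ℕ → R} {psiT : R[X]} {t : R}
    (hpsiT : psiT = ∑ i ∈ range (r + 1), C (ac i) * X ^ q ^ i) (hq : 0 < q)
    {v : K} (hv : v * algebraMap R K t = 1) (a : Fq[X]) :
    aeval v (psiOf psiT a) * algebraMap R K t ^ q ^ (r * a.natDegree) =
      algebraMap R K (∑ i ∈ a.support, algebraMap Fq R (a.coeff i) * scaledIter q r ac t i *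
        t ^ (q ^ (r * a.natDegree) - q ^ (r * i))) := by
  rw [psiOf, Polynomial.sum_def, map_sum, sum_mul, map_sum]
  refine sum_congr rfl fun i hi => ?_
  have hle : q ^ (r * i) ≤ q ^ (r * a.natDegree) :=
    Nat.pow_le_pow_right hq (Nat.mul_le_mul_left _ (le_natDegree_of_mem_supp i hi))
  rw [← Nat.add_sub_cancel' hle, pow_add, Nat.add_sub_cancel_left, map_mul, map_mul, map_mul,
    aeval_C, ← aeval_psiIter_mul_pow hpsiT hq hv, map_pow]
  ring

theorem exists_mem_mul_eq_pow {R : Type*} [CommRing R] [IsDomain R] [IsIntegrallyClosed R]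
    {I : Ideal R} [IsReduced (R ⧸ I)] {f t : R} {q r : ℕ} (hq : 1 < q) (hr : 1 ≤ r)
    (hf : f ≠ 0) (htI : t ∈ I) (hdvd : f ^ q ∣ t ^ ((q ^ r - 1) * (q - 1))) :
    ∃ c ∈ I, f * c = t ^ (q ^ r - q ^ (r - 1)) := by
  obtain ⟨c, hc⟩ := by simpa using pow_geomSum_dvd_pow (by omega) hdvd 1
  obtain ⟨s, hs⟩ := hdvd
  have hexp : (q ^ r - q ^ (r - 1)) * q = (q ^ r - 1) * (q - 1) + (q - 1) := by
    rw [Nat.sub_mul, pow_sub_one_mul (by omega), ← Nat.succ_mul,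
      Nat.succ_eq_add_one, Nat.sub_add_cancel (Nat.one_le_pow _ _ (by omega)), Nat.mul_sub_one]
  have hcq : c ^ q = s * t ^ (q - 1) := by
    refine mul_left_cancel₀ (pow_ne_zero q hf) ?_
    rw [← mul_pow, ← hc, ← pow_mul, hexp, pow_add, hs, mul_assoc]
  refine ⟨c, (Ideal.isRadical_iff_quotient_reduced I).2 ‹_› ⟨q, ?_⟩, hc.symm⟩
  exact hcq ▸ I.mul_mem_left _ (I.pow_mem_of_mem htI _ (by omega))

theorem evAt_add {Fq R : Type*} [Field Fq] [Fintype Fq] [CommRing R] [IsDomain R]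
    [Algebra Fq R] (psiT : R[X]) (t : R) (a b : Fq[X]) :
    evAt psiT t (a + b) = evAt psiT t a + evAt psiT t b := by
  rw [evAt, evAt, evAt, psiOf, psiOf, psiOf, sum_add_index, map_add]
  · simp
  · simp [add_mul]

section EvAt

variable {Fq R : Type*} [Field Fq] [Fintype Fq] [CommRing R] [IsDomain R] [Algebra Fq R]
  {r : ℕ} {ac : ℕ → R} {psiT : R[X]} {I : Ideal R} {t : R}

theorem evAt_mul_pow_eq_pow_mul_unit [IsIntegrallyClosed R] [IsAdicComplete I R]
    [IsReduced (R ⧸ I)] (hr : 1 ≤ r)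
    (hpsiT : psiT = ∑ i ∈ range (r + 1), C (ac i) * X ^ (Fintype.card Fq) ^ i)
    (hf : ac r ≠ 0) (ht0 : t ≠ 0) (htI : t ∈ I)
    (hdvd : ac r ^ Fintype.card Fq ∣
      t ^ ((Fintype.card Fq ^ r - 1) * (Fintype.card Fq - 1)))
    {a : Fq[X]} (ha : a ≠ 0) :
    ∃ U : Rˣ, evAt psiT t a * algebraMap R (FractionRing R) t ^
        (Fintype.card Fq) ^ (r * a.natDegree) =
      algebraMap R (FractionRing R)
        (ac r ^ (∑ j ∈ range a.natDegree, (Fintype.card Fq) ^ (r * j)) * U) := by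
  set q := Fintype.card Fq
  have hq : 1 < q := Fintype.one_lt_card
  obtain ⟨c, hc, hfc⟩ := exists_mem_mul_eq_pow hq hr hf htI hdvd
  have hv : (algebraMap R (FractionRing R) t)⁻¹ * algebraMap R (FractionRing R) t = 1 :=
    inv_mul_cancel₀ ((map_ne_zero_iff _ (IsFractionRing.injective R _)).2 ht0)
  have hd : ∀ j < r, q ^ r - q ^ (r - 1) ≤ q ^ r - q ^ j := fun j hj =>
    Nat.sub_le_sub_left (Nat.pow_le_pow_right (by omega) (by omega)) _
  obtain ⟨U, hU⟩ := sum_coeff_mul_eq_pow_mul_unit (N := fun i => q ^ (r * i)) hfc hc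
    (scaledIter_eq_pow_mul (by omega) hfc hc hd) ha fun i hi =>
      ⟨Nat.geomSum_pow_mul_lt (by omega) r hi,
        Nat.mul_geomSum_pow_mul_sub_le (by omega) r (Nat.sub_le_sub_left (Nat.one_le_pow _ _
          (by omega)) _) i a.natDegree⟩
  exact ⟨U, by rw [evAt, aeval_psiOf_mul_pow hpsiT (by omega) hv, hU]⟩

theorem exists_evAt_mul_eq_one [IsIntegrallyClosed R] [IsAdicComplete I R]
    [IsReduced (R ⧸ I)] (hr : 1 ≤ r)
    (hpsiT : psiT = ∑ i ∈ range (r + 1), C (ac i) * X ^ (Fintype.card Fq) ^ i)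
    (hf : ac r ≠ 0) (ht0 : t ≠ 0) (htI : t ∈ I)
    (hdvd : ac r ^ Fintype.card Fq ∣
      t ^ ((Fintype.card Fq ^ r - 1) * (Fintype.card Fq - 1)))
    {a : Fq[X]} (ha : a ≠ 0) :
    ∃ x : R, ∃ u : Rˣ, evAt psiT t a * algebraMap R (FractionRing R) x = 1 ∧
      t ^ (Fintype.card Fq) ^ (r * a.natDegree - 1) ∣ x ∧
      x * ac r ^ (∑ j ∈ range a.natDegree, (Fintype.card Fq) ^ (r * j)) =
        u * t ^ (Fintype.card Fq) ^ (r * a.natDegree) := by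
  set q := Fintype.card Fq
  set m := a.natDegree
  set F := ac r ^ (∑ j ∈ range m, q ^ (r * j))
  have hq : 0 < q := Fintype.card_pos
  obtain ⟨U, hU⟩ := evAt_mul_pow_eq_pow_mul_unit hr hpsiT hf ht0 htI hdvd ha
  obtain ⟨y, hy⟩ := pow_geomSum_dvd_pow hq hdvd m
  have hle : q ^ (r * m - 1) ≤ q ^ (r * m) := Nat.pow_le_pow_right hq (Nat.sub_le _ _)
  have hx : y * ↑U⁻¹ * t ^ q ^ (r * m - 1) * F = ↑U⁻¹ * t ^ q ^ (r * m) := by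
    rw [← Nat.sub_add_cancel hle, pow_add, hy]
    ring
  refine ⟨y * ↑U⁻¹ * t ^ q ^ (r * m - 1), U⁻¹, ?_, dvd_mul_left _ _, hx⟩
  have hF : algebraMap R (FractionRing R) F ≠ 0 :=
    (map_ne_zero_iff _ (IsFractionRing.injective R _)).2 (pow_ne_zero _ hf)
  refine mul_right_cancel₀ hF ?_
  calc _ = algebraMap R (FractionRing R) ↑U⁻¹ *
        (evAt psiT t a * algebraMap R (FractionRing R) t ^ q ^ (r * m)) := by
        rw [mul_assoc, ← map_mul, hx, map_mul, map_pow]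
        ring
    _ = 1 * algebraMap R (FractionRing R) F := by
        rw [hU, ← map_mul, mul_comm F, Units.inv_mul_cancel_left, one_mul]

end EvAt

theorem statement17_general {Fq : Type*} [Field Fq] [Fintype Fq]
    {R : Type*} [CommRing R] [IsDomain R] [IsIntegrallyClosed R]
    [Algebra Fq R]
    (r : ℕ) (hr : 1 ≤ r) (ac : ℕ → R)
    (psiT : Polynomial R)
    (hpsiT : psiT = ∑ i ∈ Finset.range (r + 1),
      Polynomial.C (ac i) * Polynomial.X ^ (Fintype.card Fq) ^ i)
    (I : Ideal R) [IsAdicComplete I R] [IsReduced (R ⧸ I)]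
    (hf : ac r ≠ 0)
    (t : R) (ht0 : t ≠ 0) (htI : t ∈ I)
    (hdvd : (ac r) ^ (Fintype.card Fq) ∣
      t ^ (((Fintype.card Fq) ^ r - 1) * (Fintype.card Fq - 1))) :
    Function.Injective (fun a : Polynomial Fq => evAt psiT t a) ∧
    (∀ a : Polynomial Fq, a ≠ 0 →
      (evAt psiT t a ≠ 0) ∧
      (∃ x ∈ I, algebraMap R (FractionRing R) x = (evAt psiT t a)⁻¹) ∧
      (a.natDegree = 0 →
        ∃ u : Rˣ, (evAt psiT t a)⁻¹ = algebraMap R (FractionRing R) ((u : R) * t)) ∧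
      (1 ≤ a.natDegree →
        ∃ x : R, algebraMap R (FractionRing R) x = (evAt psiT t a)⁻¹ ∧
          t ^ ((Fintype.card Fq) ^ (r * a.natDegree - 1)) ∣ x ∧
          ∃ u : Rˣ,
            x * (ac r) ^ (∑ j ∈ Finset.range a.natDegree, (Fintype.card Fq) ^ (r * j)) =
              (u : R) * t ^ ((Fintype.card Fq) ^ (r * a.natDegree)))) ∧
    (∀ n : ℕ, 1 ≤ n →
      {a : Polynomial Fq | a ≠ 0 ∧
        ¬ ∃ x ∈ I ^ n, algebraMap R (FractionRing R) x = (evAt psiT t a)⁻¹}.Finite) := by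
  set q := Fintype.card Fq
  have key := fun a (ha : a ≠ 0) => exists_evAt_mul_eq_one hr hpsiT hf ht0 htI hdvd ha
  have hne : ∀ a : Fq[X], a ≠ 0 → evAt psiT t a ≠ 0 := fun a ha =>
    let ⟨_, _, h, _⟩ := key a ha; left_ne_zero_of_mul_eq_one h
  have hmem : ∀ {a : Fq[X]} {x : R}, t ^ q ^ (r * a.natDegree - 1) ∣ x →
      x ∈ I ^ q ^ (r * a.natDegree - 1) :=
    fun h => (I ^ _).mem_of_dvd h (Ideal.pow_mem_pow htI _)
  refine ⟨(injective_iff_map_eq_zero (AddMonoidHom.mk' _ (evAt_add psiT t))).2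
    fun a h => by_contra fun ha => hne a ha h, fun a ha => ?_, fun n _ => ?_⟩
  · obtain ⟨x, u, hinv, hdvd, hx⟩ := key a ha
    replace hinv := eq_inv_of_mul_eq_one_right hinv
    refine ⟨hne a ha, ⟨x, Ideal.pow_le_self (pow_pos Fintype.card_pos _).ne'
      (hmem hdvd), hinv⟩, fun h0 => ⟨u, ?_⟩, fun _ => ⟨x, hinv, hdvd, u, hx⟩⟩
    rw [← hinv]
    simpa [h0] using congrArg (algebraMap R (FractionRing R)) hx
  · refine (finite_setOf_natDegree_le Fq n).subset fun a ⟨ha, hnot⟩ => ?_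
    by_contra! hlt
    replace hlt : n < a.natDegree := not_le.1 hlt
    obtain ⟨x, _, hinv, hdvd, _⟩ := key a ha
    have hn : n ≤ q ^ (r * a.natDegree - 1) :=
      calc n ≤ r * a.natDegree - 1 := by
            have := Nat.le_mul_of_pos_left a.natDegree hr
            omega
        _ ≤ _ := (Nat.lt_pow_self Fintype.one_lt_card).le
    exact hnot ⟨x, Ideal.pow_le_pow_right hn (hmem hdvd), eq_inv_of_mul_eq_one_right hinv⟩

/-- Let `R` be an integrally closed domain which is an `F_q[T]`-algebra,
`ψ_T = Σ_{i=0}^r a_i·X^{q^i}` with `a_0` the image of `T` and `f := a_r ≠ 0`, let `I` be an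
ideal with `R` `I`-adically complete and `R/I` reduced, and let `t ∈ I` be nonzero with
`f^q ∣ t^{(q^r−1)(q−1)}`.  Then, with `h_a := ψ(a)(t^{−1})^{−1} ∈ Q = Frac(R)`:
the map `a ↦ ψ(a)(t^{−1})` is injective; for nonzero `a` of degree `m`: `ψ(a)(t^{−1}) ≠ 0`,
`h_a ∈ I`, if `m = 0` then `h_a·t^{−1} ∈ R^×`, if `m ≥ 1` then `h_a ∈ R`,
`t^{q^{rm−1}} ∣ h_a` and `h_a·f^{E_m} = u·t^{q^{rm}}` for a unit `u`; and for every `n ≥ 1`,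
`h_a ∈ I^n` for all but finitely many nonzero `a`. -/
theorem statement17 {Fq : Type*} [Field Fq] [Fintype Fq]
    {R : Type*} [CommRing R] [IsDomain R] [IsIntegrallyClosed R]
    [Algebra Fq R] [Algebra (Polynomial Fq) R] [IsScalarTower Fq (Polynomial Fq) R]
    (r : ℕ) (hr : 1 ≤ r) (ac : ℕ → R)
    (ha0 : ac 0 = algebraMap (Polynomial Fq) R Polynomial.X)
    (psiT : Polynomial R)
    (hpsiT : psiT = ∑ i ∈ Finset.range (r + 1),
      Polynomial.C (ac i) * Polynomial.X ^ (Fintype.card Fq) ^ i)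
    (I : Ideal R) [IsAdicComplete I R] [IsReduced (R ⧸ I)]
    (hf : ac r ≠ 0)
    (t : R) (ht0 : t ≠ 0) (htI : t ∈ I)
    (hdvd : (ac r) ^ (Fintype.card Fq) ∣
      t ^ (((Fintype.card Fq) ^ r - 1) * (Fintype.card Fq - 1))) :
    Function.Injective (fun a : Polynomial Fq => evAt psiT t a) ∧
    (∀ a : Polynomial Fq, a ≠ 0 →
      (evAt psiT t a ≠ 0) ∧
      (∃ x ∈ I, algebraMap R (FractionRing R) x = (evAt psiT t a)⁻¹) ∧
      (a.natDegree = 0 →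
        ∃ u : Rˣ, (evAt psiT t a)⁻¹ = algebraMap R (FractionRing R) ((u : R) * t)) ∧
      (1 ≤ a.natDegree →
        ∃ x : R, algebraMap R (FractionRing R) x = (evAt psiT t a)⁻¹ ∧
          t ^ ((Fintype.card Fq) ^ (r * a.natDegree - 1)) ∣ x ∧
          ∃ u : Rˣ,
            x * (ac r) ^ (∑ j ∈ Finset.range a.natDegree, (Fintype.card Fq) ^ (r * j)) =
              (u : R) * t ^ ((Fintype.card Fq) ^ (r * a.natDegree)))) ∧
    (∀ n : ℕ, 1 ≤ n →
      {a : Polynomial Fq | a ≠ 0 ∧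
        ¬ ∃ x ∈ I ^ n, algebraMap R (FractionRing R) x = (evAt psiT t a)⁻¹}.Finite) :=
  statement17_general r hr ac psiT hpsiT I hf t ht0 htI hdvd
end
end

section
/- Let q be a prime power and let V be a valuation ring that is an F_q[T]-algebra, with field of fractions K (so the image of the structure map θ : F_q[T] → K lies in V). Let d ≥ 1 and let φ_T(z) = θ(T)·z + Σ_{i=1}^{d} a_i·z^{q^i} ∈ K[z] with a_d ≠ 0 (so φ_T defines a Drinfeld F_q[T]-module of rank d over K with trivialized line bundle). Then there exist a finite separable field extension K' of K, a valuation ring V' of K' with V' ∩ K = V, and an element c ∈ (K')^× such that c^{q^i − 1}·a_i ∈ V' for all 1 ≤ i ≤ d and c^{q^j − 1}·a_j ∈ (V')^× for some 1 ≤ j ≤ d (i.e., the conjugated module z ↦ c^{−1}·φ_T(c·z) has coefficients in V' and some coefficient of degree ≥ q is a unit of V', so it extends to a generalized Drinfeld module over V'). -/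
/-!
Choose `j` for which `v(a_j)^{1/(q^j-1)}` is maximal and let `c` be a `(q^j-1)`-th root of
`a_j⁻¹`. Then `c^{q^j-1} a_j = 1`, and maximality gives `v(c^{q^i-1} a_i) ≤ 1` for every `i`.
Since `q^j - 1 ≡ -1` modulo the characteristic, `X^{q^j-1} - a_j⁻¹` is separable, so `K(c)/K`
is finite separable, and `V` extends to a valuation ring of `K(c)` by Chevalley's theorem.
-/

open scoped IntermediateField

theorem Finset.exists_pow_le_pow_of_forall_ne_zero {ι Γ₀ : Type*}
    [LinearOrderedCommGroupWithZero Γ₀] {s : Finset ι} (hs : s.Nonempty) (f : ι → Γ₀)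
    {n : ι → ℕ} (hn : ∀ i ∈ s, n i ≠ 0) :
    ∃ j ∈ s, ∀ i ∈ s, f i ^ n j ≤ f j ^ n i := by
  classical
  -- Comparing `f i ^ (1 / n i)` is done by raising everything to the power `∏ k ∈ s, n k`.
  set M := ∏ k ∈ s, n k
  set e : ι → ℕ := fun i => ∏ k ∈ s.erase i, n k
  have hM : M ≠ 0 := Finset.prod_ne_zero_iff.mpr hn
  have he : ∀ i ∈ s, e i * n i = M := fun i hi => Finset.prod_erase_mul _ _ hi
  obtain ⟨j, hj, hmax⟩ := s.exists_max_image (fun i => f i ^ e i) hs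
  refine ⟨j, hj, fun i hi => le_of_pow_le_pow_left₀ hM zero_le ?_⟩
  calc (f i ^ n j) ^ M = (f i ^ e i) ^ (n i * n j) := by
        rw [← pow_mul, ← pow_mul, ← he i hi]; ring_nf
    _ ≤ (f j ^ e j) ^ (n i * n j) := pow_le_pow_left₀ zero_le (hmax i hi) _
    _ = (f j ^ n i) ^ M := by
        rw [← pow_mul, ← pow_mul, ← he j hj]; ring_nf

namespace ValuationSubring

variable {K L : Type*} [Field K] [Field L]

theorem mem_of_pow_mem (V : ValuationSubring K) {x : K} {n : ℕ} (hn : n ≠ 0)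
    (h : x ^ n ∈ V) : x ∈ V := by
  rw [← V.valuation_le_one_iff, map_pow] at h
  rw [← V.valuation_le_one_iff]
  exact le_of_pow_le_pow_left₀ hn zero_le (by rwa [one_pow])

theorem exists_comap_eq (f : K →+* L) (V : ValuationSubring K) :
    ∃ V' : ValuationSubring L, V'.comap f = V := by
  obtain ⟨V', hmem, hloc⟩ := IsLocalRing.exists_factor_valuationRing (f.comp V.subtype)
  refine ⟨V', le_antisymm (fun x hx => ?_) (fun x hx => hmem ⟨x, hx⟩)⟩
  by_contra hxV
  have hx0 : x ≠ 0 := by rintro rfl; exact hxV V.zero_mem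
  have hinv : x⁻¹ ∈ V := (V.mem_or_inv_mem x).resolve_left hxV
  have hunit : IsUnit (⟨x⁻¹, hinv⟩ : V) := by
    refine hloc.map_nonunit _ (IsUnit.of_mul_eq_one ⟨f x, hx⟩ (Subtype.ext ?_))
    simp [hx0]
  rw [valuation_eq_one_iff, map_inv₀, inv_eq_one] at hunit
  exact hxV (V.mem_of_valuation_le_one x hunit.le)

theorem pow_mul_algebraMap_mem_of_comap_eq [Algebra K L] {V : ValuationSubring K}
    {V' : ValuationSubring L} (hV : V'.comap (algebraMap K L) = V) {b x : K} (hb : b ≠ 0)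
    {c : L} {N m : ℕ} (hN : N ≠ 0) (hc : c ^ N = algebraMap K L b⁻¹)
    (hxb : V.valuation x ^ N ≤ V.valuation b ^ m) : c ^ m * algebraMap K L x ∈ V' := by
  refine V'.mem_of_pow_mem hN ?_
  have hpow : (c ^ m * algebraMap K L x) ^ N = algebraMap K L (b⁻¹ ^ m * x ^ N) := by
    rw [mul_pow, ← pow_mul, mul_comm m N, pow_mul, hc, map_mul, map_pow, map_pow]
  rw [hpow, ← mem_comap, hV, ← valuation_le_one_iff, map_mul, map_pow, map_pow, map_inv₀,
    inv_pow, inv_mul_le_one₀ (pow_pos (zero_lt_iff.mpr ((Valuation.ne_zero_iff _).mpr hb)) _)]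
  exact hxb

end ValuationSubring

theorem IntermediateField.exists_finiteDimensional_isSeparable_pow_eq {K L : Type*} [Field K]
    [Field L] [IsAlgClosed L] [Algebra K L] {a : K} (ha : a ≠ 0) {N : ℕ} (hN : (N : K) ≠ 0) :
    ∃ K' : IntermediateField K L, FiniteDimensional K K' ∧ Algebra.IsSeparable K K' ∧
      ∃ c : K', c ^ N = algebraMap K K' a := by
  have hN0 : N ≠ 0 := by rintro rfl; exact hN Nat.cast_zero
  obtain ⟨c, hc⟩ := IsAlgClosed.exists_pow_nat_eq (algebraMap K L a) (Nat.pos_of_ne_zero hN0)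
  have hroot : Polynomial.aeval c (Polynomial.X ^ N - Polynomial.C a) = 0 := by simp [hc]
  have hsep : IsSeparable K c :=
    (Polynomial.separable_X_pow_sub_C a hN ha).of_dvd (minpoly.dvd K c hroot)
  refine ⟨K⟮c⟯, adjoin.finiteDimensional hsep.isIntegral,
    (isSeparable_adjoin_simple_iff_isSeparable K L).mpr hsep, AdjoinSimple.gen K c,
    Subtype.ext hc⟩

theorem natCast_pow_sub_one_ne_zero {R : Type*} [Ring R] [Nontrivial R] {q : ℕ} (hq0 : q ≠ 0)
    (hq : (q : R) = 0) {m : ℕ} (hm : m ≠ 0) : ((q ^ m - 1 : ℕ) : R) ≠ 0 := by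
  rw [Nat.cast_sub (Nat.one_le_pow _ _ (Nat.pos_of_ne_zero hq0)), Nat.cast_pow, hq,
    zero_pow hm, zero_sub, Nat.cast_one]
  exact neg_ne_zero.mpr one_ne_zero


theorem statement19_general (Fq : Type) [Field Fq] [Fintype Fq]
    (K : Type) [Field K] [Algebra (Polynomial Fq) K]
    (V : ValuationSubring K)
    (d : ℕ) (hd : 1 ≤ d) (a : ℕ → K) (had : a d ≠ 0) :
    ∃ K' : IntermediateField K (AlgebraicClosure K),
      FiniteDimensional K ↥K' ∧ Algebra.IsSeparable K ↥K' ∧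
      ∃ V' : ValuationSubring ↥K',
        (∀ x : K, algebraMap K ↥K' x ∈ V' ↔ x ∈ V) ∧
        ∃ c : ↥K', c ≠ 0 ∧
          (∀ i : ℕ, 1 ≤ i → i ≤ d →
            c ^ ((Fintype.card Fq) ^ i - 1) * algebraMap K ↥K' (a i) ∈ V') ∧
          ∃ j : ℕ, 1 ≤ j ∧ j ≤ d ∧
            c ^ ((Fintype.card Fq) ^ j - 1) * algebraMap K ↥K' (a j) ≠ 0 ∧
            c ^ ((Fintype.card Fq) ^ j - 1) * algebraMap K ↥K' (a j) ∈ V' ∧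
            (c ^ ((Fintype.card Fq) ^ j - 1) * algebraMap K ↥K' (a j))⁻¹ ∈ V' := by
  set q := Fintype.card Fq
  have hqK : (q : K) = 0 := by
    rw [← map_natCast (algebraMap (Polynomial Fq) K), ← map_natCast Polynomial.C,
      FiniteField.cast_card_eq_zero, map_zero, map_zero]
  have hexp : ∀ i ∈ Finset.Icc 1 d, ((q ^ i - 1 : ℕ) : K) ≠ 0 := fun i hi =>
    natCast_pow_sub_one_ne_zero Fintype.card_ne_zero hqK (by simp at hi; omega)
  have hexp₀ : ∀ i ∈ Finset.Icc 1 d, q ^ i - 1 ≠ 0 := fun i hi h => hexp i hi (by simp [h])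
  have hdI : d ∈ Finset.Icc 1 d := by simp [hd]
  obtain ⟨j, hj, hmax⟩ := Finset.exists_pow_le_pow_of_forall_ne_zero ⟨d, hdI⟩
    (fun i => V.valuation (a i)) hexp₀
  have haj : a j ≠ 0 := by
    intro h
    have := hmax d hdI
    simp only [h, map_zero, zero_pow (hexp₀ d hdI), le_zero_iff, pow_eq_zero_iff (hexp₀ j hj),
      Valuation.zero_iff] at this
    exact had this
  obtain ⟨K', hfin, hsep, c, hc⟩ :=
    IntermediateField.exists_finiteDimensional_isSeparable_pow_eq (L := AlgebraicClosure K)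
      (inv_ne_zero haj) (hexp j hj)
  obtain ⟨V', hV'⟩ := V.exists_comap_eq (algebraMap K K')
  have hunit : c ^ (q ^ j - 1) * algebraMap K K' (a j) = 1 := by
    rw [hc, ← map_mul, inv_mul_cancel₀ haj, map_one]
  refine ⟨K', hfin, hsep, V', fun x => by rw [← ValuationSubring.mem_comap, hV'], c, ?_,
    fun i hi1 hid => ?_, j, ?_⟩
  · rintro rfl
    simp [zero_pow (hexp₀ j hj)] at hunit
  · exact ValuationSubring.pow_mul_algebraMap_mem_of_comap_eq hV' haj (hexp₀ j hj) hc
      (hmax i (by simp [hi1, hid]))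
  · rw [Finset.mem_Icc] at hj
    rw [hunit, inv_one]
    exact ⟨hj.1, hj.2, one_ne_zero, V'.one_mem, V'.one_mem⟩

/-- Let `V` be a valuation ring of a field `K` which is an
`F_q[T]`-algebra (with structure map `θ` landing in `V`), and let
`φ_T(z) = θ(T)·z + Σ_{i=1}^d a_i·z^{q^i}` with `a_d ≠ 0` define a Drinfeld module of rank
`d ≥ 1` over `K`.  Then there are a finite separable extension `K'` of `K`, a valuation
ring `V'` of `K'` with `V' ∩ K = V`, and `c ∈ (K')^×` such that
`c^{q^i−1}·a_i ∈ V'` for all `1 ≤ i ≤ d` and `c^{q^j−1}·a_j` is a unit of `V'` for some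
`1 ≤ j ≤ d`. -/
theorem statement19 (Fq : Type) [Field Fq] [Fintype Fq]
    (K : Type) [Field K] [Algebra (Polynomial Fq) K]
    (V : ValuationSubring K)
    (hθ : ∀ b : Polynomial Fq, algebraMap (Polynomial Fq) K b ∈ V)
    (d : ℕ) (hd : 1 ≤ d) (a : ℕ → K) (had : a d ≠ 0) :
    ∃ K' : IntermediateField K (AlgebraicClosure K),
      FiniteDimensional K ↥K' ∧ Algebra.IsSeparable K ↥K' ∧
      ∃ V' : ValuationSubring ↥K',
        (∀ x : K, algebraMap K ↥K' x ∈ V' ↔ x ∈ V) ∧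
        ∃ c : ↥K', c ≠ 0 ∧
          (∀ i : ℕ, 1 ≤ i → i ≤ d →
            c ^ ((Fintype.card Fq) ^ i - 1) * algebraMap K ↥K' (a i) ∈ V') ∧
          ∃ j : ℕ, 1 ≤ j ∧ j ≤ d ∧
            c ^ ((Fintype.card Fq) ^ j - 1) * algebraMap K ↥K' (a j) ≠ 0 ∧
            c ^ ((Fintype.card Fq) ^ j - 1) * algebraMap K ↥K' (a j) ∈ V' ∧
            (c ^ ((Fintype.card Fq) ^ j - 1) * algebraMap K ↥K' (a j))⁻¹ ∈ V' :=
  statement19_general Fq K V d hd a had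
end
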